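/- Let n ≥ 1 and let C be a real invertible n×n matrix such that the real part of x*Cx is strictly positive for every nonzero vector x ∈ ℂⁿ (where x* denotes the conjugate transpose of x). Define Φ := −CᵀC⁻¹, regarded as a complex n×n matrix. Then 1 is not an eigenvalue of Φ; that is, there is no nonzero x ∈ ℂⁿ with Φx = x. -/

import Mathlib

/-!
Put `y = C⁻¹ x`. Then `Φ x = x` reads `Cᵀ y = -C y`. As `C` is real, `y* Cᵀ y` is the complex
conjugate of `y* C y`, so the two have the same real part; hence `Re (y* C y) = 0`, which by
positivity forces `y = 0` and so `x = C y = 0`.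
-/

open Matrix

lemma Matrix.star_dotProduct_conjTranspose_mulVec {ι R : Type*} [Fintype ι] [CommRing R]
    [StarRing R] (B : Matrix ι ι R) (y : ι → R) :
    star y ⬝ᵥ (Bᴴ *ᵥ y) = star (star y ⬝ᵥ (B *ᵥ y)) := by
  rw [dotProduct_mulVec, ← star_mulVec, star_dotProduct]

lemma Matrix.map_ofReal_mul {l m n : Type*} [Fintype m] (A : Matrix l m ℝ) (B : Matrix m n ℝ) :
    (A * B).map Complex.ofReal = A.map Complex.ofReal * B.map Complex.ofReal :=
  Matrix.map_mul (f := Complex.ofRealHom)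

lemma Matrix.transpose_map_ofReal {m n : Type*} (C : Matrix m n ℝ) :
    Cᵀ.map Complex.ofReal = (C.map Complex.ofReal)ᴴ := by
  ext i j
  simp

lemma Matrix.eq_zero_of_conjTranspose_mulVec_eq_neg {ι : Type*} [Fintype ι]
    {B : Matrix ι ι ℂ} (hB : ∀ x : ι → ℂ, x ≠ 0 → 0 < (star x ⬝ᵥ (B *ᵥ x)).re)
    {y : ι → ℂ} (hy : Bᴴ *ᵥ y = -(B *ᵥ y)) : y = 0 := by
  by_contra hy0
  have hre := congrArg Complex.re (star_dotProduct_conjTranspose_mulVec B y)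
  rw [hy, dotProduct_neg, Complex.neg_re, Complex.star_def, Complex.conj_re] at hre
  linarith [hB y hy0]

theorem stmt_2_general (n : ℕ) (C : Matrix (Fin n) (Fin n) ℝ)
    (hinv : IsUnit C)
    (hC : ∀ x : Fin n → ℂ, x ≠ 0 →
      0 < (star x ⬝ᵥ ((C.map Complex.ofReal) *ᵥ x)).re)
    (Φ : Matrix (Fin n) (Fin n) ℂ)
    (hΦ : Φ = (-(Cᵀ * C⁻¹)).map Complex.ofReal) :
    ¬ ∃ x : Fin n → ℂ, x ≠ 0 ∧ Φ *ᵥ x = x := by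
  rintro ⟨x, hx, hfix⟩
  set y := C⁻¹.map Complex.ofReal *ᵥ x
  have hCy : C.map Complex.ofReal *ᵥ y = x := by
    rw [mulVec_mulVec, ← map_ofReal_mul,
      mul_nonsing_inv C ((isUnit_iff_isUnit_det C).mp hinv)]
    simp
  have hCty : (C.map Complex.ofReal)ᴴ *ᵥ y = -x := by
    rw [← transpose_map_ofReal, mulVec_mulVec, ← map_ofReal_mul]
    conv_rhs => rw [← hfix, hΦ, Matrix.map_neg _ Complex.ofReal_neg, neg_mulVec, neg_neg]
  have hy : y = 0 := eq_zero_of_conjTranspose_mulVec_eq_neg hC (by rw [hCty, hCy])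
  exact hx (by rw [← hCy, hy, mulVec_zero])

/-- If a real invertible `n × n` matrix `C` satisfies that `x* C x` has strictly positive
real part for every nonzero complex vector `x`, then `1` is not an eigenvalue of the
Coxeter matrix `Φ = -Cᵀ C⁻¹`: there is no nonzero complex vector `x` with `Φ x = x`. -/
theorem stmt_2 (n : ℕ) (hn : 1 ≤ n) (C : Matrix (Fin n) (Fin n) ℝ)
    (hinv : IsUnit C)
    (hC : ∀ x : Fin n → ℂ, x ≠ 0 →
      0 < (star x ⬝ᵥ ((C.map Complex.ofReal) *ᵥ x)).re)
    (Φ : Matrix (Fin n) (Fin n) ℂ)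
    (hΦ : Φ = (-(Cᵀ * C⁻¹)).map Complex.ofReal) :
    ¬ ∃ x : Fin n → ℂ, x ≠ 0 ∧ Φ *ᵥ x = x :=
  stmt_2_general n C hinv hC Φ hΦ
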